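/- arXiv:2406.01147 — 9 statements merged into one kernel-verified Lean document; each statement's English description precedes it below -/
import Mathlib

section
/- For a positive integer n, there exist positive integers a and b such that (a,b,n,n) is a donut if and only if there exist divisors p and q of n with gcd(p,q) = 1 and p < q < 2p. -/
/-- A donut `(a,b,x,y)`: exterior `a × b` with `1 < b ≤ a`, hole `x × y` strictly inside,
and the exterior area is twice the hole area. -/
def IsDonut (a b x y : ℕ) : Prop :=
  1 < b ∧ b ≤ a ∧ a * b = 2 * (x * y) ∧ 1 ≤ x ∧ x < a ∧ 1 ≤ y ∧ y < b

/-- A square-holed donut with hole side `n` exists iff `n` has coprime divisors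
`p < q < 2p`. -/
theorem squareHoled_donut_iff (n : ℕ) (hn : 0 < n) :
    (∃ a b : ℕ, 0 < a ∧ 0 < b ∧ IsDonut a b n n) ↔
      ∃ p q : ℕ, p ∣ n ∧ q ∣ n ∧ Nat.gcd p q = 1 ∧ p < q ∧ q < 2 * p := by
  constructor
  · rintro ⟨a, b, ha, hb, h1b, hba, hab, -, hna, -, hnb⟩
    set g := Nat.gcd a n with hg
    have hg0 : 0 < g := Nat.gcd_pos_of_pos_left n ha
    set q := a / g with hqdef
    set p := n / g with hpdef
    have hA : g * q = a := Nat.mul_div_cancel' (Nat.gcd_dvd_left a n)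
    have hN : g * p = n := Nat.mul_div_cancel' (Nat.gcd_dvd_right a n)
    have hcop : Nat.Coprime q p := Nat.coprime_div_gcd_div_gcd hg0
    have hpn : p ∣ n := Nat.div_dvd_of_dvd (Nat.gcd_dvd_right a n)
    have hpq : p < q := by
      have : g * p < g * q := by rw [hA, hN]; exact hna
      exact Nat.lt_of_mul_lt_mul_left this
    have ha2n : a < 2 * n := by nlinarith
    have hq2p : q < 2 * p := by
      have : g * q < g * (2 * p) := by rw [hA]; rw [show g * (2 * p) = 2 * (g * p) by ring, hN]; exact ha2n
      exact Nat.lt_of_mul_lt_mul_left this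
    have key : q * b = 2 * g * (p * p) := by
      have h1 : g * (q * b) = g * (2 * g * (p * p)) := by
        calc g * (q * b) = (g * q) * b := by ring
          _ = 2 * (n * n) := by rw [hA]; exact hab
          _ = 2 * ((g * p) * (g * p)) := by rw [hN]
          _ = g * (2 * g * (p * p)) := by ring
      exact Nat.eq_of_mul_eq_mul_left hg0 h1
    have hqdvd : q ∣ 2 * g := by
      have hq2gpp : q ∣ 2 * g * (p * p) := ⟨b, key.symm⟩
      exact (hcop.mul_right hcop).dvd_of_dvd_mul_right hq2gpp
    rcases Nat.even_or_odd q with hqe | hqo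
    · obtain ⟨r, hr⟩ := hqe
      have hrq : q = 2 * r := by omega
      have hrg : r ∣ g := by
        obtain ⟨c, hc⟩ := hqdvd
        rw [hrq] at hc
        have hc2 : 2 * g = 2 * (r * c) := by rw [hc]; ring
        exact ⟨c, by omega⟩
      have hrn : r ∣ n := hrg.trans (Nat.gcd_dvd_right a n)
      have hrcop : Nat.Coprime r p :=
        Nat.Coprime.coprime_dvd_left ⟨2, by omega⟩ hcop
      exact ⟨r, p, hrn, hpn, hrcop, by omega, by omega⟩
    · have hq2 : Nat.Coprime q 2 := by
        rw [Nat.coprime_two_right]; exact hqo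
      have hqg : q ∣ g := hq2.dvd_of_dvd_mul_left hqdvd
      have hqn : q ∣ n := hqg.trans (Nat.gcd_dvd_right a n)
      exact ⟨p, q, hpn, hqn, Nat.coprime_comm.mp hcop, hpq, hq2p⟩
  · rintro ⟨p, q, ⟨m, hm⟩, ⟨k, hk⟩, hcop, hpq, hq2p⟩
    have hp0 : 0 < p := by omega
    have hm0 : 0 < m := by
      rcases Nat.eq_zero_or_pos m with h | h
      · exfalso; rw [h, mul_zero] at hm; omega
      · exact h
    have hk0 : 0 < k := by
      rcases Nat.eq_zero_or_pos k with h | h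
      · exfalso; rw [h, mul_zero] at hk; omega
      · exact h
    have hna : n < q * m := by
      calc n = p * m := hm
        _ < q * m := (Nat.mul_lt_mul_right hm0).mpr hpq
    have hnb : n < 2 * (k * p) := by
      calc n = q * k := hk
        _ < (2 * p) * k := (Nat.mul_lt_mul_right hk0).mpr hq2p
        _ = 2 * (k * p) := by ring
    have hprod : (q * m) * (2 * (k * p)) = 2 * (n * n) := by
      calc (q * m) * (2 * (k * p)) = 2 * ((p * m) * (q * k)) := by ring
        _ = 2 * (n * n) := by rw [← hm, ← hk]
    rcases le_total (q * m) (2 * (k * p)) with h | h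
    · exact ⟨2 * (k * p), q * m, by omega, by omega,
        by omega, h, by rw [← hprod]; ring, hn, hnb, hn, hna⟩
    · exact ⟨q * m, 2 * (k * p), by omega, by omega,
        by omega, h, hprod, hn, hna, hn, hnb⟩
end

section
/- Let n be a positive integer and let p and q be divisors of n with gcd(p,q) = 1 and p < q < 2p. Then setting a = 2pn/q and b = qn/p, the quadruple (a,b,n,n) satisfies a*b = 2*n^2, a > n, and b > n; in particular (a,b,n,n) is a donut (after ordering the exterior sides so the larger comes first). -/
theorem Nat.mul_mul_div_mul_mul_div {c n p q : ℕ} (hp : p ∣ n) (hq : q ∣ n) :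
    (c * p * n / q) * (q * n / p) = c * n ^ 2 := by
  rcases Nat.eq_zero_or_pos n with rfl | hn
  · simp
  have hpq : 0 < q * p := Nat.mul_pos (Nat.pos_of_dvd_of_pos hq hn) (Nat.pos_of_dvd_of_pos hp hn)
  rw [Nat.div_mul_div_comm (hq.mul_left _) (hp.mul_left _)]
  have hrearrange : c * p * n * (q * n) = c * n ^ 2 * (q * p) := by ring
  rw [hrearrange, Nat.mul_div_cancel _ hpq]

theorem Nat.lt_mul_div_of_lt {m n d : ℕ} (hn : 0 < n) (hd : d ∣ m * n) (hdm : d < m) :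
    n < m * n / d := by
  rw [Nat.lt_div_iff_mul_lt' hd]
  exact Nat.mul_lt_mul_of_pos_right hdm hn

theorem isDonut_max_min_of_square_hole {a b n : ℕ} (hn : 0 < n) (ha : n < a) (hb : n < b)
    (hab : a * b = 2 * n ^ 2) : IsDonut (max a b) (min a b) n n := by
  have hmin : n < min a b := lt_min ha hb
  have harea : max a b * min a b = 2 * (n * n) := by
    rw [max_mul_min, hab, sq]
  exact ⟨by omega, min_le_max, harea, hn, hmin.trans_le min_le_max, hn, hmin⟩

theorem squareHoled_donut_construction_general (n p q : ℕ) (hn : 0 < n)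
    (hp : p ∣ n) (hq : q ∣ n) (h1 : p < q) (h2 : q < 2 * p) :
    (2 * p * n / q) * (q * n / p) = 2 * n ^ 2 ∧
    n < 2 * p * n / q ∧ n < q * n / p ∧
    IsDonut (max (2 * p * n / q) (q * n / p)) (min (2 * p * n / q) (q * n / p)) n n := by
  have harea := Nat.mul_mul_div_mul_mul_div (c := 2) hp hq
  have ha : n < 2 * p * n / q := Nat.lt_mul_div_of_lt hn (hq.mul_left _) h2
  have hb : n < q * n / p := Nat.lt_mul_div_of_lt hn (hp.mul_left _) h1
  exact ⟨harea, ha, hb, isDonut_max_min_of_square_hole hn ha hb harea⟩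

/-- Given coprime divisors `p < q < 2p` of `n`, the quadruple
`(2pn/q, qn/p, n, n)` has the donut area and size properties, and after ordering the
exterior sides it is a donut. -/
theorem squareHoled_donut_construction (n p q : ℕ) (hn : 0 < n)
    (hp : p ∣ n) (hq : q ∣ n) (hpq : Nat.gcd p q = 1) (h1 : p < q) (h2 : q < 2 * p) :
    (2 * p * n / q) * (q * n / p) = 2 * n ^ 2 ∧
    n < 2 * p * n / q ∧ n < q * n / p ∧
    IsDonut (max (2 * p * n / q) (q * n / p)) (min (2 * p * n / q) (q * n / p)) n n :=
  squareHoled_donut_construction_general n p q hn hp hq h1 h2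
end

section
/- If (a,b,n,n) is a donut for positive integers a, b, n, then there exist divisors p and q of n with gcd(p,q) = 1 and p < q < 2p. -/
/-- Auxiliary: if `g^2 * (C * D) = n^2` with `C, D` coprime, then `C` and `D` are squares
`r^2, s^2` and `n = g * (r * s)`. -/
lemma donut_aux (g C D n : ℕ) (hg : 0 < g) (hCD : Nat.Coprime C D)
    (key : g ^ 2 * (C * D) = n ^ 2) :
    ∃ r s : ℕ, C = r ^ 2 ∧ D = s ^ 2 ∧ n = g * (r * s) := by
  have hgn : g ∣ n := (Nat.pow_dvd_pow_iff (two_ne_zero)).mp ⟨C * D, key.symm⟩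
  obtain ⟨m, rfl⟩ := hgn
  have key2 : C * D = m ^ 2 := by
    have h2 : g ^ 2 * (C * D) = g ^ 2 * m ^ 2 := by rw [key]; ring
    exact Nat.eq_of_mul_eq_mul_left (by positivity) h2
  have hU : IsUnit (gcd C D) := Nat.isUnit_iff.mpr hCD
  obtain ⟨r, hr⟩ := exists_eq_pow_of_mul_eq_pow hU key2
  obtain ⟨s, hs⟩ := exists_eq_pow_of_mul_eq_pow (by rwa [gcd_comm] at hU)
    (by rwa [mul_comm] at key2)
  refine ⟨r, s, hr, hs, ?_⟩
  have hm : m = r * s := by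
    have : m ^ 2 = (r * s) ^ 2 := by rw [← key2, hr, hs]; ring
    exact Nat.pow_left_injective (by norm_num) this
  rw [hm]

/-- If `(a,b,n,n)` is a donut then `n` has coprime divisors `p < q < 2p`. -/
theorem squareHoled_donut_divisors (a b n : ℕ) (h : IsDonut a b n n) :
    ∃ p q : ℕ, p ∣ n ∧ q ∣ n ∧ Nat.gcd p q = 1 ∧ p < q ∧ q < 2 * p := by
  obtain ⟨hb1, hba, harea, hn1, hna, _, hnb⟩ := h
  have hn0 : 0 < n := hn1
  have ha0 : 0 < a := lt_trans hn0 hna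
  have hb0 : 0 < b := lt_trans hn0 hnb
  -- a < 2n
  have ha2n : a < 2 * n := by
    have h1 : a * n < a * b := Nat.mul_lt_mul_of_pos_left hnb ha0
    rw [harea] at h1
    have h2 : a * n < (2 * n) * n := by nlinarith
    exact Nat.lt_of_mul_lt_mul_right h2
  set g := Nat.gcd a b with hg
  have hg0 : 0 < g := Nat.gcd_pos_of_pos_left _ ha0
  obtain ⟨A, hA⟩ : g ∣ a := Nat.gcd_dvd_left a b
  obtain ⟨B, hB⟩ : g ∣ b := Nat.gcd_dvd_right a b
  have hAB : Nat.Coprime A B := by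
    have h' := Nat.coprime_div_gcd_div_gcd (m := a) (n := b) hg0
    rw [← hg] at h'
    have e1 : a / g = A := by rw [hA, Nat.mul_div_cancel_left _ hg0]
    have e2 : b / g = B := by rw [hB, Nat.mul_div_cancel_left _ hg0]
    rwa [e1, e2] at h'
  have hA0 : 0 < A := by
    rcases Nat.eq_zero_or_pos A with h0 | h; · rw [hA, h0, mul_zero] at ha0; omega
    exact h
  have hB0 : 0 < B := by
    rcases Nat.eq_zero_or_pos B with h0 | h; · rw [hB, h0, mul_zero] at hb0; omega
    exact h
  have key : g ^ 2 * (A * B) = 2 * n ^ 2 := by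
    have : (g * A) * (g * B) = 2 * (n * n) := by rw [← hA, ← hB]; exact harea
    nlinarith [this]
  -- 2 divides A * B
  have h2AB : 2 ∣ A * B := by
    by_contra hodd
    have hABodd : (A * B).factorization 2 = 0 := Nat.factorization_eq_zero_of_not_dvd hodd
    have hAB0 : A * B ≠ 0 := by positivity
    have e1 : (g ^ 2 * (A * B)).factorization 2 = 2 * g.factorization 2 := by
      rw [Nat.factorization_mul (by positivity) hAB0, Nat.factorization_pow]
      simp [hABodd]
    have e2 : (2 * n ^ 2).factorization 2 = 1 + 2 * n.factorization 2 := by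
      rw [Nat.factorization_mul two_ne_zero (by positivity), Nat.factorization_pow]
      simp [Nat.Prime.factorization_self Nat.prime_two]
    rw [key, e2] at e1
    omega
  rcases (Nat.prime_two.dvd_mul).mp h2AB with hA2 | hB2
  · -- A = 2 * A'
    obtain ⟨A', rfl⟩ := hA2
    have hA'B : Nat.Coprime A' B := Nat.Coprime.coprime_dvd_left (dvd_mul_left A' 2) hAB
    have key2 : g ^ 2 * (A' * B) = n ^ 2 := by
      have h2 : 2 * (g ^ 2 * (A' * B)) = 2 * n ^ 2 := by rw [← key]; ring
      omega
    obtain ⟨r, s, hr, hs, hnrs⟩ := donut_aux g A' B n hg0 hA'B key2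
    have hr0 : 0 < r := by
      rcases Nat.eq_zero_or_pos r with h0 | h; · rw [h0] at hr; omega
      exact h
    have hs0 : 0 < s := by
      rcases Nat.eq_zero_or_pos s with h0 | h; · rw [h0] at hs; omega
      exact h
    refine ⟨r, s, ⟨g * s, by rw [hnrs]; ring⟩, ⟨g * r, by rw [hnrs]; ring⟩, ?_, ?_, ?_⟩
    · exact (Nat.coprime_pow_left_iff two_pos r s).mp
        ((Nat.coprime_pow_right_iff two_pos (r ^ 2) s).mp (by rw [← hr, ← hs]; exact hA'B))
    · -- r < s from n < b
      have h1 : g * (r * s) < g * s ^ 2 := by rw [← hnrs, ← hs]; rwa [hB] at hnb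
      have h1' : r * s < s ^ 2 := Nat.lt_of_mul_lt_mul_left h1
      have e : s ^ 2 = s * s := by ring
      rw [e] at h1'
      exact Nat.lt_of_mul_lt_mul_right h1'
    · -- s < 2r from n < a
      have h1 : g * (r * s) < g * (2 * A') := by
        rw [← hnrs]; rw [hA] at hna; exact hna
      have h1' : r * s < 2 * A' := Nat.lt_of_mul_lt_mul_left h1
      rw [hr] at h1'
      have e : 2 * r ^ 2 = r * (2 * r) := by ring
      rw [e] at h1'
      exact Nat.lt_of_mul_lt_mul_left h1'
  · -- B = 2 * B'
    obtain ⟨B', rfl⟩ := hB2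
    have hAB' : Nat.Coprime A B' := Nat.Coprime.coprime_dvd_right (dvd_mul_left B' 2) hAB
    have key2 : g ^ 2 * (A * B') = n ^ 2 := by
      have h2 : 2 * (g ^ 2 * (A * B')) = 2 * n ^ 2 := by rw [← key]; ring
      omega
    obtain ⟨r, s, hr, hs, hnrs⟩ := donut_aux g A B' n hg0 hAB' key2
    have hr0 : 0 < r := by
      rcases Nat.eq_zero_or_pos r with h0 | h; · rw [h0] at hr; omega
      exact h
    have hs0 : 0 < s := by
      rcases Nat.eq_zero_or_pos s with h0 | h; · rw [h0] at hs; omega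
      exact h
    refine ⟨s, r, ⟨g * r, by rw [hnrs]; ring⟩, ⟨g * s, by rw [hnrs]; ring⟩, ?_, ?_, ?_⟩
    · exact Nat.Coprime.symm ((Nat.coprime_pow_left_iff two_pos r s).mp
        ((Nat.coprime_pow_right_iff two_pos (r ^ 2) s).mp (by rw [← hr, ← hs]; exact hAB')))
    · -- s < r from n < a
      have h1 : g * (r * s) < g * A := by rw [← hnrs]; rw [hA] at hna; exact hna
      have h1' : r * s < A := Nat.lt_of_mul_lt_mul_left h1
      rw [hr] at h1'
      have e : r ^ 2 = r * r := by ring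
      rw [e] at h1'
      exact Nat.lt_of_mul_lt_mul_left h1'
    · -- r < 2s from a < 2n
      have h1 : g * A < 2 * (g * (r * s)) := by rw [← hnrs, ← hA]; exact ha2n
      rw [hr] at h1
      have e : g * r ^ 2 = g * (r * r) := by ring
      have e2 : 2 * (g * (r * s)) = g * (r * (2 * s)) := by ring
      rw [e, e2] at h1
      have h1' : r * r < r * (2 * s) := Nat.lt_of_mul_lt_mul_left h1
      exact Nat.lt_of_mul_lt_mul_left h1'
end

section
/- If n is a power of a single prime, i.e. n = p^e for some prime p and natural number e, then there is no square-holed donut with hole side n; that is, there are no positive integers a and b such that (a,b,n,n) is a donut. -/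
/-- If `n` is a prime power `p^e`, there is no square-holed donut with hole side `n`. -/
theorem no_squareHoled_donut_of_primePow (n p e : ℕ) (hp : Nat.Prime p) (hn : n = p ^ e) :
    ¬ ∃ a b : ℕ, 0 < a ∧ 0 < b ∧ IsDonut a b n n := by
  rintro ⟨a, b, ha, hb, h1b, hba, hab, hx1, hxa, hy1, hyb⟩
  have hp2 : 2 ≤ p := hp.two_le
  have hnn : n * n = p ^ (2 * e) := by
    rw [hn, ← pow_add]; ring_nf
  have hna : n < a := lt_of_lt_of_le hyb hba
  have ha2n : a < 2 * n := by nlinarith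
  have hpen : 2 * n ≤ p ^ (e + 1) := by
    rw [hn, pow_succ, mul_comm (p ^ e) p]
    exact Nat.mul_le_mul_right _ hp2
  rcases Nat.even_or_odd a with hev | hodd
  · -- a even: a = 2*c, c = p^k, then n < 2*p^k < 2*n gives contradiction
    obtain ⟨c, hc⟩ := hev
    have hcc : c * b = n * n := by
      have : 2 * (c * b) = 2 * (n * n) := by rw [← hab, hc]; ring
      omega
    have hcdvd : c ∣ p ^ (2 * e) := by rw [← hnn, ← hcc]; exact Dvd.intro _ rfl
    obtain ⟨k, hk, hck⟩ := (Nat.dvd_prime_pow hp).mp hcdvd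
    have ha' : a = 2 * c := by omega
    have h1 : n < 2 * p ^ k := by rw [← hck, ← ha']; exact hna
    have h2 : 2 * p ^ k < 2 * n := by rw [← hck, ← ha']; exact ha2n
    have hke : p ^ k < p ^ e := by rw [hn] at h2; omega
    have hke' : k < e := (Nat.pow_lt_pow_iff_right hp.one_lt).mp hke
    have : 2 * p ^ k ≤ p ^ (k + 1) := by
      rw [pow_succ, mul_comm (p ^ k) p]; exact Nat.mul_le_mul_right _ hp2
    have : p ^ (k + 1) ≤ p ^ e := Nat.pow_le_pow_right hp.pos hke'
    rw [hn] at h1; omega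
  · -- a odd: a ∣ p^(2e), a = p^k, then p^e < p^k < p^(e+1)
    have hcop : Nat.Coprime a 2 := by
      exact Nat.coprime_two_right.mpr hodd
    have hdvd : a ∣ 2 * (n * n) := ⟨b, hab.symm⟩
    have hdvd' : a ∣ p ^ (2 * e) := by
      rw [← hnn]
      exact hcop.dvd_of_dvd_mul_left hdvd
    obtain ⟨k, hk, hak⟩ := (Nat.dvd_prime_pow hp).mp hdvd'
    have h1 : p ^ e < p ^ k := by rw [← hak, ← hn]; exact hna
    have h2 : p ^ k < p ^ (e + 1) := by rw [← hak]; omega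
    have := (Nat.pow_lt_pow_iff_right hp.one_lt).mp h1
    have := (Nat.pow_lt_pow_iff_right hp.one_lt).mp h2
    omega
end

section
/- For a positive integer n, there exist positive integers a and b such that (n,n,a,b) is a donut if and only if n is the sum of a Pythagorean triple, i.e. there exist positive integers x, y, z with x^2 + y^2 = z^2 and n = x + y + z. -/
/-- A square donut of side length `n` exists iff `n` is the sum of a Pythagorean triple. -/
theorem square_donut_iff (n : ℕ) (hn : 0 < n) :
    (∃ a b : ℕ, 0 < a ∧ 0 < b ∧ IsDonut n n a b) ↔
      ∃ x y z : ℕ, 0 < x ∧ 0 < y ∧ 0 < z ∧ x ^ 2 + y ^ 2 = z ^ 2 ∧ n = x + y + z := by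
  constructor
  · rintro ⟨a, b, ha, hb, h1, -, harea, hax, han, hby, hbn⟩
    -- a + b > n
    have hab : n < a + b := by nlinarith
    refine ⟨n - a, n - b, a + b - n, by omega, by omega, by omega, ?_, by omega⟩
    have e1 : n - a + a = n := by omega
    have e2 : n - b + b = n := by omega
    have e3 : a + b - n + n = a + b := by omega
    nlinarith [e1, e2, e3]
  · rintro ⟨x, y, z, hx, hy, hz, hpyth, hsum⟩
    refine ⟨y + z, x + z, by omega, by omega, by omega, le_rfl, by nlinarith,
      by omega, by omega, by omega, by omega⟩
end

section
/- If n = x + y + z for some Pythagorean triple (x,y,z) of positive integers (x^2 + y^2 = z^2), then there exist positive integers a and b with 2*a*b = n^2, a < n, and b < n; in particular there is a square donut (n,n,a,b). -/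
/-- If `n` is the sum of a Pythagorean triple, then there are positive `a, b` with
`2ab = n^2`, `a < n`, `b < n`; in particular `(n,n,a,b)` is a square donut. -/
theorem square_donut_of_pythagorean_sum (n x y z : ℕ)
    (hx : 0 < x) (hy : 0 < y) (hz : 0 < z)
    (hpyth : x ^ 2 + y ^ 2 = z ^ 2) (hn : n = x + y + z) :
    ∃ a b : ℕ, 0 < a ∧ 0 < b ∧ 2 * (a * b) = n ^ 2 ∧ a < n ∧ b < n ∧ IsDonut n n a b := by
  subst hn
  refine ⟨x + z, y + z, by omega, by omega, ?_, by omega, by omega,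
    by omega, le_rfl, ?_, by omega, by omega, by omega, by omega⟩
  · nlinarith [hpyth]
  · have : (x + y + z) * (x + y + z) = (x + y + z) ^ 2 := by ring
    rw [this]; nlinarith [hpyth]
end

section
/- If (n,n,a,b) is a donut for positive integers n, a, b, then n is the sum of a Pythagorean triple: there exist positive integers x, y, z with x^2 + y^2 = z^2 and n = x + y + z. -/
/-- If `(n,n,a,b)` is a donut then `n` is the sum of a Pythagorean triple. -/
theorem pythagorean_sum_of_square_donut (n a b : ℕ) (h : IsDonut n n a b) :
    ∃ x y z : ℕ, 0 < x ∧ 0 < y ∧ 0 < z ∧ x ^ 2 + y ^ 2 = z ^ 2 ∧ n = x + y + z := by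
  obtain ⟨h1, h2, h3, ha1, ha2, hb1, hb2⟩ := h
  have hab : n < a + b := by
    by_contra hc
    push_neg at hc
    have : (a + b) * (a + b) ≤ n * n := Nat.mul_le_mul hc hc
    nlinarith [Nat.mul_le_mul hc hc]
  refine ⟨n - a, n - b, a + b - n, by omega, by omega, by omega, ?_, by omega⟩
  zify [le_of_lt ha2, le_of_lt hb2, le_of_lt hab]
  have h3' : (n : ℤ) * n = 2 * (a * b) := by exact_mod_cast h3
  ring_nf
  nlinarith [h3']
end

section
/- Let n, a, b be positive integers with n^2 = 2*a*b. Then lcm(gcd(n,a), gcd(n,b)) = n. -/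
/-- If `n^2 = 2ab` for positive integers, then `lcm(gcd(n,a), gcd(n,b)) = n`. -/
theorem lcm_gcd_eq_of_sq_eq_two_mul (n a b : ℕ) (hn : 0 < n) (ha : 0 < a) (hb : 0 < b)
    (h : n ^ 2 = 2 * (a * b)) : Nat.lcm (Nat.gcd n a) (Nat.gcd n b) = n := by
  have hn0 : n ≠ 0 := hn.ne'
  have ha0 : a ≠ 0 := ha.ne'
  have hb0 : b ≠ 0 := hb.ne'
  have hga : Nat.gcd n a ≠ 0 := Nat.gcd_ne_zero_left hn0
  have hgb : Nat.gcd n b ≠ 0 := Nat.gcd_ne_zero_left hn0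
  have hL0 : Nat.lcm (Nat.gcd n a) (Nat.gcd n b) ≠ 0 := Nat.lcm_ne_zero hga hgb
  apply Nat.dvd_antisymm
  · exact Nat.lcm_dvd (Nat.gcd_dvd_left n a) (Nat.gcd_dvd_left n b)
  · rw [← Nat.factorization_le_iff_dvd hn0 hL0]
    intro p
    rw [Nat.factorization_lcm hga hgb, Nat.factorization_gcd hn0 ha0,
      Nat.factorization_gcd hn0 hb0]
    simp only [Finsupp.sup_apply, Finsupp.inf_apply]
    set vn := n.factorization p
    set va := a.factorization p
    set vb := b.factorization p
    have key : vn + vn = va + (vb + (Nat.factorization 2) p) := by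
      have := congrArg (fun m => m.factorization p) h
      simpa [Nat.factorization_mul, Nat.factorization_pow, two_mul, mul_comm,
        ha0, hb0, add_assoc] using this
    have h2 : (Nat.factorization 2) p ≤ 1 := by
      rw [Nat.Prime.factorization Nat.prime_two]
      by_cases hp : 2 = p <;> simp [Finsupp.single_apply, hp]
    by_cases hva : vn ≤ va
    · exact le_sup_of_le_left (by simp [min_eq_left hva, hva, Nat.min_eq_left])
    by_cases hvb : vn ≤ vb
    · exact le_sup_of_le_right (by simp [hvb, Nat.min_eq_left])
    omega
end

section
/- If (n,n,a,b) is a donut for positive integers n, a, b, then the donut is not primitive: gcd(n,a) > 1 and gcd(n,b) > 1. -/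
/-- A square donut `(n,n,a,b)` is never primitive: `gcd(n,a) > 1` and `gcd(n,b) > 1`. -/
theorem square_donut_not_primitive (n a b : ℕ) (h : IsDonut n n a b) :
    1 < Nat.gcd n a ∧ 1 < Nat.gcd n b := by
  obtain ⟨h1, _, h3, hx1, hx2, hy1, hy2⟩ := h
  have key : ∀ m k : ℕ, 1 ≤ m → m < n → 1 ≤ k → k < n → n * n = 2 * (m * k) →
      1 < Nat.gcd n m := by
    intro m k hm1 hmn hk1 hkn heq
    rcases Nat.lt_or_ge 1 (Nat.gcd n m) with hg | hg
    · exact hg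
    · exfalso
      have hcop : Nat.Coprime n m := Nat.le_antisymm hg (Nat.one_le_iff_ne_zero.mpr
        (Nat.gcd_ne_zero_left (by omega)))
      have hdvd : m ∣ n * n := ⟨2 * k, by linarith [heq]⟩
      have : m = 1 := (Nat.Coprime.mul hcop hcop).symm.eq_one_of_dvd hdvd
      subst this
      have : n * n < 2 * n := by
        calc n * n = 2 * (1 * k) := heq
        _ = 2 * k := by ring_nf
        _ < 2 * n := by omega
      nlinarith
  exact ⟨key a b hx1 hx2 hy1 hy2 h3, key b a hy1 hy2 hx1 hx2 (by linarith [h3, Nat.mul_comm a b])⟩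
end
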